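/- Suppose the past assortments are the revenue-ordered assortments and the uncertainty set U_0 is nonempty. Then sup_{S ∈ 𝒮} inf_{λ ∈ U_0} R^λ(S) = max_{m ∈ {1,…,n}} Σ_{i ∈ S_m} r(i)·v_{m,i}. -/

import Mathlib

/-!
Let `S ∋ 0` be any assortment and `s` its smallest nonzero product, so that `S` lies inside the
revenue-ordered assortment `A = {0, s, …, n}`. Given a consistent choice model, modify each ranking
`σ` by moving `s` to the place right after `c`, the `σ`-top of `A`. On every revenue-ordered
assortment containing `s` the product `c` is also present and still beats `s`, so all historical
choices are unchanged and the new model stays in `U_0`; on `S` the new top is `c` or `s`, whose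
revenue is at most `r c`. Hence the worst case on `S` is at most the (data-determined) revenue of
`A`, while on a past assortment the data pin the revenue down exactly.
-/

namespace RobustAssortment

/-- `i` is the most preferred product of the assortment `S` under the ranking `σ`. -/
def isTop {n : ℕ} (σ : Equiv.Perm (Fin (n + 1))) (S : Finset (Fin (n + 1)))
    (i : Fin (n + 1)) : Prop :=
  i ∈ S ∧ ∀ j ∈ S, σ i ≤ σ j

instance {n : ℕ} (σ : Equiv.Perm (Fin (n + 1))) (S : Finset (Fin (n + 1)))
    (i : Fin (n + 1)) : Decidable (isTop σ S i) := by
  unfold isTop; infer_instance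
/-- A ranking-based choice model: nonnegative weights on rankings summing to one. -/
def IsChoiceModel {n : ℕ} (lam : Equiv.Perm (Fin (n + 1)) → ℝ) : Prop :=
  (∀ σ, 0 ≤ lam σ) ∧ ∑ σ : Equiv.Perm (Fin (n + 1)), lam σ = 1

/-- Choice probability `D^λ_i(S)`. -/
noncomputable def choiceProb {n : ℕ} (lam : Equiv.Perm (Fin (n + 1)) → ℝ)
    (S : Finset (Fin (n + 1))) (i : Fin (n + 1)) : ℝ :=
  ∑ σ : Equiv.Perm (Fin (n + 1)), if isTop σ S i then lam σ else 0

/-- Expected revenue `R^λ(S)`. -/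
noncomputable def expRev {n : ℕ} (r : Fin (n + 1) → ℝ)
    (lam : Equiv.Perm (Fin (n + 1)) → ℝ) (S : Finset (Fin (n + 1))) : ℝ :=
  ∑ i ∈ S, r i * choiceProb lam S i

/-- The uncertainty set `U_η` of choice models consistent with the sales data. -/
def Uset {n M : ℕ} (Sm : Fin M → Finset (Fin (n + 1)))
    (v : Fin M → Fin (n + 1) → ℝ) (η : ℝ) :
    Set (Equiv.Perm (Fin (n + 1)) → ℝ) :=
  {lam | IsChoiceModel lam ∧
    ∀ m : Fin M, ∀ i ∈ Sm m, |choiceProb lam (Sm m) i - v m i| ≤ η}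

/-- Worst-case expected revenue `inf_{λ ∈ U_η} R^λ(S)`. -/
noncomputable def wcRev {n M : ℕ} (Sm : Fin M → Finset (Fin (n + 1)))
    (v : Fin M → Fin (n + 1) → ℝ) (η : ℝ) (r : Fin (n + 1) → ℝ)
    (S : Finset (Fin (n + 1))) : ℝ :=
  sInf {x | ∃ lam ∈ Uset Sm v η, x = expRev r lam S}

open Finset

variable {n : ℕ}

section Rankings

variable {σ : Equiv.Perm (Fin (n + 1))} {S : Finset (Fin (n + 1))} {i j : Fin (n + 1)}

lemma isTop.unique (hi : isTop σ S i) (hj : isTop σ S j) : i = j :=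
  σ.injective <| le_antisymm (hi.2 j hj.1) (hj.2 i hi.1)

lemma exists_isTop (σ : Equiv.Perm (Fin (n + 1))) (hS : S.Nonempty) : ∃ i, isTop σ S i := by
  obtain ⟨i, hi, hmin⟩ := S.exists_min_image σ hS
  exact ⟨i, hi, hmin⟩

lemma sum_ite_isTop (h : isTop σ S i) (f : Fin (n + 1) → ℝ) :
    ∑ j ∈ S, (if isTop σ S j then f j else 0) = f i := by
  rw [sum_eq_single_of_mem i h.1 fun j _ hji => if_neg fun hj => hji (hj.unique h), if_pos h]

lemma isTop_iff_of_imp {τ : Equiv.Perm (Fin (n + 1))} (h : ∀ j, isTop σ S j → isTop τ S j) :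
    isTop τ S i ↔ isTop σ S i := by
  refine ⟨fun hi => ?_, h i⟩
  obtain ⟨j, hj⟩ := exists_isTop σ ⟨i, hi.1⟩
  rwa [hi.unique (h j hj)]

end Rankings

section RankByKey

variable {k : ℕ} {α : Type*} [LinearOrder α]

def rankByKey (key : Fin k → α) : Equiv.Perm (Fin k) :=
  (Tuple.sort key)⁻¹

lemma rankByKey_le_rankByKey_iff {key : Fin k → α} (hkey : Function.Injective key)
    (i j : Fin k) : rankByKey key i ≤ rankByKey key j ↔ key i ≤ key j := by
  have hsort : StrictMono (key ∘ Tuple.sort key) :=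
    (Tuple.monotone_sort key).strictMono_of_injective (hkey.comp (Equiv.injective _))
  have hkey_rankByKey : ∀ x, (key ∘ Tuple.sort key) (rankByKey key x) = key x := by
    simp [rankByKey]
  rw [← hsort.le_iff_le, hkey_rankByKey, hkey_rankByKey]

end RankByKey

section MoveAfter

variable {σ : Equiv.Perm (Fin (n + 1))} {c s : Fin (n + 1)} {S T U : Finset (Fin (n + 1))}
  {i t : Fin (n + 1)}

/-- Ranks of `σ` with `s` moved right after `c`: doubling the ranks leaves a free slot after
each product. -/
def moveAfterKey (σ : Equiv.Perm (Fin (n + 1))) (c s : Fin (n + 1)) (j : Fin (n + 1)) : ℕ :=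
  if j = s then 2 * σ c + 1 else 2 * σ j

lemma moveAfterKey_injective (σ : Equiv.Perm (Fin (n + 1))) (c s : Fin (n + 1)) :
    Function.Injective (moveAfterKey σ c s) := by
  intro i j hij
  unfold moveAfterKey at hij
  split_ifs at hij with hi hj hj
  · exact hi.trans hj.symm
  all_goals first | omega | exact σ.injective (Fin.ext (by omega))

def moveAfter (σ : Equiv.Perm (Fin (n + 1))) (c s : Fin (n + 1)) : Equiv.Perm (Fin (n + 1)) :=
  rankByKey (moveAfterKey σ c s)

lemma isTop_moveAfter_iff_forall :
    isTop (moveAfter σ c s) T i ↔ i ∈ T ∧ ∀ j ∈ T, moveAfterKey σ c s i ≤ moveAfterKey σ c s j :=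
  and_congr_right fun _ => forall₂_congr fun j _ =>
    rankByKey_le_rankByKey_iff (moveAfterKey_injective σ c s) i j

lemma isTop_moveAfter_of_isTop (hcs : σ c ≤ σ s) (hT : s ∈ T → c ∈ T) (h : isTop σ T i) :
    isTop (moveAfter σ c s) T i := by
  refine isTop_moveAfter_iff_forall.2 ⟨h.1, fun j hj => ?_⟩
  have hij : (σ i : ℕ) ≤ σ j := h.2 j hj
  unfold moveAfterKey
  obtain rfl | his := eq_or_ne i s
  · obtain rfl : c = i := σ.injective (le_antisymm hcs (h.2 c (hT h.1)))
    obtain rfl | hjc := eq_or_ne j c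
    · rfl
    · have : (σ c : ℕ) ≠ σ j := fun he => hjc (σ.injective (Fin.ext he)).symm
      rw [if_pos rfl, if_neg hjc]
      omega
  · rw [if_neg his]
    split_ifs with hjs
    · have : (σ i : ℕ) ≤ σ c := h.2 c (hT (hjs ▸ hj))
      omega
    · omega

lemma isTop_moveAfter_iff (hcs : σ c ≤ σ s) (hT : s ∈ T → c ∈ T) :
    isTop (moveAfter σ c s) T i ↔ isTop σ T i :=
  isTop_iff_of_imp fun _ => isTop_moveAfter_of_isTop hcs hT

lemma isTop_moveAfter_of_mem (hc : isTop σ U c) (hsU : s ∈ U) (hSU : S ⊆ U) (hcS : c ∈ S) :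
    isTop (moveAfter σ c s) S c :=
  isTop_moveAfter_of_isTop (hc.2 s hsU) (fun _ => hcS) ⟨hcS, fun j hj => hc.2 j (hSU hj)⟩

lemma isTop_moveAfter_eq_or_eq (hc : isTop σ U c) (hSU : S ⊆ U) (hs : s ∈ S)
    (ht : isTop (moveAfter σ c s) S t) : t = c ∨ t = s := by
  refine or_iff_not_imp_right.2 fun hts => σ.injective (le_antisymm ?_ (hc.2 t (hSU ht.1)))
  have hkey := (isTop_moveAfter_iff_forall.1 ht).2 s hs
  simp only [moveAfterKey, if_neg hts, ↓reduceIte] at hkey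
  rw [Fin.le_iff_val_le_val]
  omega

end MoveAfter

section RevenueOrdered

def revOrdered (n a : ℕ) : Finset (Fin (n + 1)) :=
  univ.filter fun i : Fin (n + 1) => i = 0 ∨ a < (i : ℕ)

variable {σ : Equiv.Perm (Fin (n + 1))} {a : ℕ} {c s t i : Fin (n + 1)} {S : Finset (Fin (n + 1))}

lemma mem_revOrdered : i ∈ revOrdered n a ↔ i = 0 ∨ a < i := by
  simp [revOrdered]

lemma self_mem_revOrdered_pred (hs0 : s ≠ 0) : s ∈ revOrdered n (s - 1) :=
  mem_revOrdered.2 (Or.inr (by have : 0 < (s : ℕ) := Fin.pos_iff_ne_zero.2 hs0; omega))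

lemma isTop_moveAfter_revOrdered_iff (hs0 : s ≠ 0) (hc : isTop σ (revOrdered n (s - 1)) c)
    (b : ℕ) (i : Fin (n + 1)) :
    isTop (moveAfter σ c s) (revOrdered n b) i ↔ isTop σ (revOrdered n b) i := by
  refine isTop_moveAfter_iff (hc.2 s (self_mem_revOrdered_pred hs0)) fun hsb => ?_
  have hbs : b < s := (mem_revOrdered.1 hsb).resolve_left hs0
  refine mem_revOrdered.2 ((mem_revOrdered.1 hc.1).imp_right fun hsc => ?_)
  omega

lemma le_of_isTop_moveAfter (hs0 : s ≠ 0) (h0 : 0 ∈ S) (hs : s ∈ S)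
    (hSs : S ⊆ revOrdered n (s - 1)) (hc : isTop σ (revOrdered n (s - 1)) c)
    (ht : isTop (moveAfter σ c s) S t) : t ≤ c := by
  by_cases hcS : c ∈ S
  · exact (ht.unique (isTop_moveAfter_of_mem hc (hSs hs) hSs hcS)).le
  · have hsc : (s : ℕ) - 1 < c := (mem_revOrdered.1 hc.1).resolve_left fun h => hcS (h ▸ h0)
    rcases isTop_moveAfter_eq_or_eq hc hSs hs ht with rfl | rfl
    · exact le_rfl
    · rw [Fin.le_iff_val_le_val]
      omega

lemma subset_revOrdered_pred_min' (hS : (S.erase 0).Nonempty) :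
    S ⊆ revOrdered n ((S.erase 0).min' hS - 1) := by
  refine fun j hj => mem_revOrdered.2 ((eq_or_ne j 0).imp_right fun hj0 => ?_)
  have hle := (S.erase 0).min'_le j (mem_erase.2 ⟨hj0, hj⟩)
  rw [Fin.le_iff_val_le_val] at hle
  have : 0 < ((S.erase 0).min' hS : ℕ) :=
    Fin.pos_iff_ne_zero.2 (mem_erase.1 ((S.erase 0).min'_mem hS)).1
  omega

end RevenueOrdered

section Pushforward

variable {G : Equiv.Perm (Fin (n + 1)) → Equiv.Perm (Fin (n + 1))}
  {lam : Equiv.Perm (Fin (n + 1)) → ℝ}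

def pushforward (G : Equiv.Perm (Fin (n + 1)) → Equiv.Perm (Fin (n + 1)))
    (lam : Equiv.Perm (Fin (n + 1)) → ℝ) (τ : Equiv.Perm (Fin (n + 1))) : ℝ :=
  ∑ σ with G σ = τ, lam σ

lemma sum_pushforward_mul (f : Equiv.Perm (Fin (n + 1)) → ℝ) :
    ∑ τ, pushforward G lam τ * f τ = ∑ σ, lam σ * f (G σ) := by
  simp only [pushforward, sum_mul]
  rw [← sum_fiberwise univ G fun σ => lam σ * f (G σ)]
  refine sum_congr rfl fun τ _ => sum_congr rfl fun σ hσ => ?_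
  rw [(mem_filter.1 hσ).2]

lemma IsChoiceModel.pushforward (h : IsChoiceModel lam) : IsChoiceModel (pushforward G lam) :=
  ⟨fun _ => sum_nonneg fun σ _ => h.1 σ, (sum_fiberwise univ G lam).trans h.2⟩

lemma choiceProb_pushforward (T : Finset (Fin (n + 1))) (i : Fin (n + 1)) :
    choiceProb (pushforward G lam) T i = ∑ σ, if isTop (G σ) T i then lam σ else 0 := by
  simpa only [choiceProb, mul_boole] using
    sum_pushforward_mul (G := G) (lam := lam) fun τ => if isTop τ T i then (1 : ℝ) else 0

lemma expRev_eq_sum_perm (r : Fin (n + 1) → ℝ) (lam : Equiv.Perm (Fin (n + 1)) → ℝ)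
    (S : Finset (Fin (n + 1))) :
    expRev r lam S = ∑ σ, lam σ * ∑ i ∈ S, if isTop σ S i then r i else 0 := by
  simp only [expRev, choiceProb, mul_sum, mul_ite, mul_zero]
  rw [sum_comm]
  simp only [mul_comm]

lemma expRev_pushforward (r : Fin (n + 1) → ℝ) (S : Finset (Fin (n + 1))) :
    expRev r (pushforward G lam) S =
      ∑ σ, lam σ * ∑ i ∈ S, if isTop (G σ) S i then r i else 0 := by
  rw [expRev_eq_sum_perm, sum_pushforward_mul]

end Pushforward

section UncertaintySet

variable {M : ℕ} {Sm : Fin M → Finset (Fin (n + 1))} {v : Fin M → Fin (n + 1) → ℝ} {η : ℝ}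
  {r : Fin (n + 1) → ℝ} {lam : Equiv.Perm (Fin (n + 1)) → ℝ} {S T : Finset (Fin (n + 1))}
  {s : Fin (n + 1)}

lemma pushforward_mem_Uset {G : Equiv.Perm (Fin (n + 1)) → Equiv.Perm (Fin (n + 1))}
    (hG : ∀ σ m i, isTop (G σ) (Sm m) i ↔ isTop σ (Sm m) i) (h : lam ∈ Uset Sm v η) :
    pushforward G lam ∈ Uset Sm v η := by
  refine ⟨h.1.pushforward, fun m i hi => ?_⟩
  have hprob : choiceProb (pushforward G lam) (Sm m) i = choiceProb lam (Sm m) i := by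
    rw [choiceProb_pushforward]
    exact sum_congr rfl fun σ _ => if_congr (hG σ m i) rfl rfl
  rw [hprob]
  exact h.2 m i hi

lemma expRev_pushforward_le {G : Equiv.Perm (Fin (n + 1)) → Equiv.Perm (Fin (n + 1))}
    (hlam : ∀ σ, 0 ≤ lam σ) (hS : S.Nonempty) (hT : T.Nonempty)
    (hG : ∀ σ t c, isTop (G σ) S t → isTop σ T c → r t ≤ r c) :
    expRev r (pushforward G lam) S ≤ expRev r lam T := by
  rw [expRev_pushforward, expRev_eq_sum_perm]
  refine sum_le_sum fun σ _ => mul_le_mul_of_nonneg_left ?_ (hlam σ)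
  obtain ⟨t, ht⟩ := exists_isTop (G σ) hS
  obtain ⟨c, hc⟩ := exists_isTop σ hT
  rw [sum_ite_isTop ht, sum_ite_isTop hc]
  exact hG σ t c ht hc

lemma expRev_nonneg (hr : ∀ i, 0 ≤ r i) (hlam : ∀ σ, 0 ≤ lam σ) (S : Finset (Fin (n + 1))) :
    0 ≤ expRev r lam S :=
  sum_nonneg fun i _ => mul_nonneg (hr i) (sum_nonneg fun σ _ => by split_ifs <;> simp [hlam σ])

lemma wcRev_le_expRev (hr : ∀ i, 0 ≤ r i) (h : lam ∈ Uset Sm v η) :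
    wcRev Sm v η r S ≤ expRev r lam S := by
  refine csInf_le ⟨0, ?_⟩ ⟨lam, h, rfl⟩
  rintro _ ⟨lam', h', rfl⟩
  exact expRev_nonneg hr h'.1.1 S

lemma expRev_eq_of_mem_Uset_zero (h : lam ∈ Uset Sm v 0) (m : Fin M) :
    expRev r lam (Sm m) = ∑ i ∈ Sm m, r i * v m i :=
  sum_congr rfl fun i hi => by rw [sub_eq_zero.1 (abs_nonpos_iff.1 (h.2 m i hi))]

lemma wcRev_eq_of_Uset_zero_nonempty (hU : (Uset Sm v 0).Nonempty) (m : Fin M) :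
    wcRev Sm v 0 r (Sm m) = ∑ i ∈ Sm m, r i * v m i := by
  obtain ⟨lam, h⟩ := hU
  have hset : {x | ∃ lam ∈ Uset Sm v 0, x = expRev r lam (Sm m)} =
      {∑ i ∈ Sm m, r i * v m i} :=
    Set.eq_singleton_iff_unique_mem.2 ⟨⟨lam, h, (expRev_eq_of_mem_Uset_zero h m).symm⟩,
      fun _ ⟨lam', h', hx⟩ => hx.trans (expRev_eq_of_mem_Uset_zero h' m)⟩
  rw [wcRev, hset, csInf_singleton]

lemma exists_mem_Uset_expRev_le (hSm : ∀ m, ∃ b, Sm m = revOrdered n b) (hr : Monotone r)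
    (hlam : lam ∈ Uset Sm v η) (hs0 : s ≠ 0) (h0 : 0 ∈ S) (hs : s ∈ S)
    (hSs : S ⊆ revOrdered n (s - 1)) :
    ∃ lam' ∈ Uset Sm v η, expRev r lam' S ≤ expRev r lam (revOrdered n (s - 1)) := by
  have hne : (revOrdered n (s - 1)).Nonempty := ⟨s, self_mem_revOrdered_pred hs0⟩
  choose c hc using fun σ => exists_isTop σ hne
  refine ⟨pushforward (fun σ => moveAfter σ (c σ) s) lam, pushforward_mem_Uset ?_ hlam,
    expRev_pushforward_le hlam.1.1 ⟨0, h0⟩ hne fun σ t c' ht hc' => hr ?_⟩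
  · intro σ m i
    obtain ⟨b, hb⟩ := hSm m
    rw [hb]
    exact isTop_moveAfter_revOrdered_iff hs0 (hc σ) b i
  · rw [hc'.unique (hc σ)]
    exact le_of_isTop_moveAfter hs0 h0 hs hSs (hc σ) ht

end UncertaintySet

lemma exists_wcRev_le {r : Fin (n + 1) → ℝ} {Sm : Fin n → Finset (Fin (n + 1))}
    {v : Fin n → Fin (n + 1) → ℝ} {S : Finset (Fin (n + 1))} (hn : 1 ≤ n) (hr0 : r 0 = 0)
    (hr : Monotone r) (hSm : ∀ m : Fin n, Sm m = revOrdered n m) (hU : (Uset Sm v 0).Nonempty)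
    (h0 : 0 ∈ S) :
    ∃ m : Fin n, wcRev Sm v 0 r S ≤ ∑ i ∈ Sm m, r i * v m i := by
  obtain ⟨lam, hlam⟩ := hU
  have hr_nonneg : ∀ i, 0 ≤ r i := fun i => hr0 ▸ hr (Fin.zero_le i)
  rcases (S.erase 0).eq_empty_or_nonempty with hS | hS
  · have hzero : expRev r lam S = 0 := sum_eq_zero fun i hi => by
      obtain rfl : i = 0 := by_contra fun hi0 => notMem_empty i (hS ▸ mem_erase.2 ⟨hi0, hi⟩)
      rw [hr0, zero_mul]
    refine ⟨⟨0, hn⟩, ?_⟩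
    calc wcRev Sm v 0 r S ≤ expRev r lam S := wcRev_le_expRev hr_nonneg hlam
      _ = 0 := hzero
      _ ≤ expRev r lam (Sm ⟨0, hn⟩) := expRev_nonneg hr_nonneg hlam.1.1 _
      _ = _ := expRev_eq_of_mem_Uset_zero hlam _
  · set s := (S.erase 0).min' hS
    obtain ⟨hs0, hs⟩ := mem_erase.1 ((S.erase 0).min'_mem hS)
    let m : Fin n := ⟨s - 1, by omega⟩
    obtain ⟨lam', hlam', hle⟩ := exists_mem_Uset_expRev_le (fun m => ⟨m, hSm m⟩) hr hlam hs0 h0 hs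
      (subset_revOrdered_pred_min' hS)
    refine ⟨m, ?_⟩
    calc wcRev Sm v 0 r S ≤ expRev r lam' S := wcRev_le_expRev hr_nonneg hlam'
      _ ≤ expRev r lam (Sm m) := hSm m ▸ hle
      _ = _ := expRev_eq_of_mem_Uset_zero hlam m

/-- The past assortment `m : Fin n` is the paper's `S_{m+1} = {0, m+1, m+2, …, n}`. -/
theorem statement3 (n : ℕ) (hn : 1 ≤ n)
    (r : Fin (n + 1) → ℝ) (hr0 : r 0 = 0) (hr : StrictMono r)
    (Sm : Fin n → Finset (Fin (n + 1)))
    (hSm : ∀ m : Fin n, Sm m =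
      Finset.univ.filter (fun i : Fin (n + 1) => i = 0 ∨ (m : ℕ) < (i : ℕ)))
    (v : Fin n → Fin (n + 1) → ℝ)
    (hU : (Uset Sm v 0).Nonempty) :
    sSup {x : ℝ | ∃ S : Finset (Fin (n + 1)), 0 ∈ S ∧ x = wcRev Sm v 0 r S} =
      sSup {x : ℝ | ∃ m : Fin n, x = ∑ i ∈ Sm m, r i * v m i} := by
  apply csSup_eq_csSup_of_forall_exists_le
  · rintro _ ⟨S, h0, rfl⟩
    obtain ⟨m, hm⟩ := exists_wcRev_le hn hr0 hr.monotone hSm hU h0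
    exact ⟨_, ⟨m, rfl⟩, hm⟩
  · rintro _ ⟨m, rfl⟩
    have h0 : (0 : Fin (n + 1)) ∈ Sm m := by simp [hSm m]
    exact ⟨_, ⟨Sm m, h0, rfl⟩, (wcRev_eq_of_Uset_zero_nonempty hU m).ge⟩

end RobustAssortment
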